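/- In an infinite word over a pushdown alphabet, if i_c is a call position and i_c + 1 is not a return position, then i_c + 1 is the initial position of the MAP that visits i_c + 1. -/
import Mathlib


/-- The type of a position in a word over a pushdown alphabet. -/
inductive SymType : Type
  | call | ret | int
deriving DecidableEq

/-- The factor strictly between `i` and `j` is well matched:
calls and returns balance out, and no prefix has more returns than calls. -/
def wellMatched (kind : ℕ → SymType) (i j : ℕ) : Prop :=
  (((Finset.Ioo i j).filter fun k => kind k = SymType.call).card =
   ((Finset.Ioo i j).filter fun k => kind k = SymType.ret).card) ∧
  ∀ m ∈ Finset.Ioo i j,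
    ((Finset.Ioc i m).filter fun k => kind k = SymType.ret).card ≤
    ((Finset.Ioc i m).filter fun k => kind k = SymType.call).card

/-- `j` is the matching return of the call `i`: the least return `j > i`
such that the factor strictly between `i` and `j` is well matched. -/
def MatchRet (kind : ℕ → SymType) (i j : ℕ) : Prop :=
  kind i = SymType.call ∧ i < j ∧ kind j = SymType.ret ∧ wellMatched kind i j ∧
  ∀ j', i < j' → j' < j → ¬ (kind j' = SymType.ret ∧ wellMatched kind i j')

/-- The abstract successor relation: a matched call maps to its matching
return; any non-call position maps to the next position provided it is not
a return. Unmatched calls (and positions followed by a return) have no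
abstract successor. -/
def absSucc (kind : ℕ → SymType) (i j : ℕ) : Prop :=
  (kind i = SymType.call ∧ MatchRet kind i j) ∨
  (kind i ≠ SymType.call ∧ j = i + 1 ∧ kind (i + 1) ≠ SymType.ret)

/-- `j` is reachable from `i` along abstract successors. -/
def reach (kind : ℕ → SymType) : ℕ → ℕ → Prop := Relation.ReflTransGen (absSucc kind)

/-- `i` and `j` lie on the same maximal abstract path (MAP). -/
def onSameMAP (kind : ℕ → SymType) (i j : ℕ) : Prop := reach kind i j ∨ reach kind j i

/-- `s` is the initial position of a MAP: nothing maps to it. -/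
def isMAPStart (kind : ℕ → SymType) (s : ℕ) : Prop := ∀ k, ¬ absSucc kind k s

/-- `s` is the initial position of the MAP visiting `i`. -/
def startsMAPOf (kind : ℕ → SymType) (s i : ℕ) : Prop := isMAPStart kind s ∧ reach kind s i

/-- The MAP visiting `i` is infinite (has no last position). -/
def infMAP (kind : ℕ → SymType) (i : ℕ) : Prop := ∀ j, reach kind i j → ∃ k, absSucc kind j k

/-- `p_∞` holds at `i` iff the MAP visiting `i` does not start at a position
`s > 0` such that `s - 1` is a call having a matching return. -/
def pInf (kind : ℕ → SymType) (i : ℕ) : Prop :=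
  ¬ ∃ s, startsMAPOf kind s i ∧ 0 < s ∧ kind (s - 1) = SymType.call ∧
    ∃ r, MatchRet kind (s - 1) r
/-- if `i_c` is a call and `i_c + 1` is not a return, then
`i_c + 1` is the initial position of the MAP visiting `i_c + 1`. -/
theorem call_succ_starts_MAP (kind : ℕ → SymType) (ic : ℕ)
    (hc : kind ic = SymType.call) (hr : kind (ic + 1) ≠ SymType.ret) :
    startsMAPOf kind (ic + 1) (ic + 1) := by
  refine ⟨fun k hk => ?_, Relation.ReflTransGen.refl⟩
  rcases hk with ⟨_, _, _, hret, _⟩ | ⟨hnc, heq, _⟩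
  · exact hr hret
  · have : k = ic := by omega
    exact hnc (this ▸ hc)
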